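/- Let R = ℂ[E₁,E₂] with the derivation e determined by e(E₁) = −2, e(E₂) = −E₁, and δ = 4E₂ − E₁². Then the kernel of e on R is exactly the ℂ-subalgebra generated by δ: a polynomial P ∈ ℂ[E₁,E₂] satisfies e(P) = 0 if and only if P is a polynomial in δ (equivalently, P ∈ ℂ[δ]). -/

import Mathlib

/-!
The substitution `E₂ ↦ δ` is an automorphism of `ℂ[E₁,E₂]` fixing `E₁`. Since `e(δ) = 0`,
conjugating `e` by it gives the derivation `-2 ∂/∂E₁`, whose kernel in characteristic zero is
`ℂ[E₂]`; the substitution carries `ℂ[E₂]` onto `ℂ[δ]`.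
-/

open MvPolynomial

namespace MvPolynomial

variable {R σ : Type*} [CommSemiring R] [NoZeroDivisors R] [CharZero R] {i : σ}
  {p : MvPolynomial σ R}

theorem pderiv_eq_zero_iff_notMem_vars : pderiv i p = 0 ↔ i ∉ p.vars := by
  classical
  refine ⟨fun h hi => ?_, pderiv_eq_zero_of_notMem_vars⟩
  obtain ⟨m, hm, hmi⟩ := (mem_vars_iff_mem_support i).mp hi
  have hsplit : m - Finsupp.single i 1 + Finsupp.single i 1 = m :=
    tsub_add_cancel_of_le <| Finsupp.single_le_iff.mpr <|
      Nat.one_le_iff_ne_zero.mpr (Finsupp.mem_support_iff.mp hmi)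
  have hcoeff := coeff_pderiv (i := i) p (m - Finsupp.single i 1)
  rw [h, coeff_zero, hsplit, eq_comm, mul_eq_zero] at hcoeff
  exact hcoeff.elim (mem_support_iff.mp hm) (Nat.cast_add_one_ne_zero _)

theorem pderiv_eq_zero_iff_mem_supported : pderiv i p = 0 ↔ p ∈ supported R {i}ᶜ := by
  rw [pderiv_eq_zero_iff_notMem_vars, mem_supported, Set.subset_compl_singleton_iff,
    Finset.mem_coe]

end MvPolynomial

namespace Derivation

variable {R A B : Type*} [CommSemiring R] [CommSemiring A] [CommSemiring B] [Algebra R A]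
  [Algebra R B]

def comapAlgEquiv (D : Derivation R B B) (ψ : A ≃ₐ[R] B) : Derivation R A A where
  toLinearMap := ψ.symm.toAlgHom.toLinearMap ∘ₗ D.toLinearMap ∘ₗ ψ.toAlgHom.toLinearMap
  map_one_eq_zero' := by simp
  leibniz' a b := by simp

@[simp]
theorem comapAlgEquiv_apply (D : Derivation R B B) (ψ : A ≃ₐ[R] B) (a : A) :
    D.comapAlgEquiv ψ a = ψ.symm (D (ψ a)) :=
  rfl

end Derivation

theorem AlgEquiv.mem_adjoin_singleton_apply_iff {R A B : Type*} [CommSemiring R] [Semiring A]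
    [Semiring B] [Algebra R A] [Algebra R B] (ψ : A ≃ₐ[R] B) (a : A) (x : B) :
    x ∈ Algebra.adjoin R {ψ a} ↔ ψ.symm x ∈ Algebra.adjoin R {a} := by
  rw [← ψ.coe_toAlgHom, ← AlgHom.map_adjoin_singleton, Subalgebra.mem_map]
  exact ⟨fun ⟨y, hy, hyx⟩ => by simpa [← hyx] using hy, fun h => ⟨_, h, by simp⟩⟩

theorem map_four_mul_X_one_sub_X_zero_sq_eq_zero {K : Type*} [CommRing K]
    {e : Derivation K (MvPolynomial (Fin 2) K) (MvPolynomial (Fin 2) K)}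
    (he1 : e (X 0) = -2) (he2 : e (X 1) = -X 0) : e (4 * X 1 - X 0 ^ 2) = 0 := by
  have h4 : e 4 = 0 := by exact_mod_cast e.map_natCast 4
  rw [map_sub, Derivation.leibniz, Derivation.leibniz_pow, he1, he2, h4]
  simp only [smul_eq_mul, nsmul_eq_mul]
  ring

section DeltaShear

variable {K : Type*} [Field K] [CharZero K]

theorem four_mul_C_inv_four {σ : Type*} : (4 : MvPolynomial σ K) * C 4⁻¹ = 1 := by
  rw [← map_ofNat C 4, ← C_mul, mul_inv_cancel₀ (by norm_num : (4 : K) ≠ 0), C_1]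

noncomputable def deltaShear : MvPolynomial (Fin 2) K ≃ₐ[K] MvPolynomial (Fin 2) K :=
  AlgEquiv.ofAlgHom (aeval ![X 0, 4 * X 1 - X 0 ^ 2]) (aeval ![X 0, C 4⁻¹ * (X 1 + X 0 ^ 2)])
    (algHom_ext fun i => by
      fin_cases i <;> simp
      linear_combination (X 1 : MvPolynomial (Fin 2) K) * four_mul_C_inv_four (K := K))
    (algHom_ext fun i => by
      fin_cases i <;> simp [map_ofNat]
      linear_combination (X 1 + X 0 ^ 2 : MvPolynomial (Fin 2) K) * four_mul_C_inv_four (K := K))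

@[simp]
theorem deltaShear_X_zero : deltaShear (X 0 : MvPolynomial (Fin 2) K) = X 0 := by
  simp [deltaShear]

@[simp]
theorem deltaShear_X_one : deltaShear (X 1 : MvPolynomial (Fin 2) K) = 4 * X 1 - X 0 ^ 2 := by
  simp [deltaShear]

theorem comapAlgEquiv_deltaShear
    {e : Derivation K (MvPolynomial (Fin 2) K) (MvPolynomial (Fin 2) K)}
    (he1 : e (X 0) = -2) (he2 : e (X 1) = -X 0) :
    e.comapAlgEquiv deltaShear = (-2 : K) • pderiv 0 := by
  refine derivation_ext fun i => ?_
  fin_cases i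
  · simp [he1, map_ofNat, Algebra.smul_def]
  · simp [map_four_mul_X_one_sub_X_zero_sq_eq_zero he1 he2]

end DeltaShear

theorem ker_e_eq_adjoin_delta
    (e : Derivation ℂ (MvPolynomial (Fin 2) ℂ) (MvPolynomial (Fin 2) ℂ))
    (he1 : e (X 0) = -2) (he2 : e (X 1) = -X 0)
    (δ : MvPolynomial (Fin 2) ℂ) (hδ : δ = 4 * X 1 - X 0 ^ 2)
    (P : MvPolynomial (Fin 2) ℂ) :
    e P = 0 ↔ P ∈ Algebra.adjoin ℂ ({δ} : Set (MvPolynomial (Fin 2) ℂ)) := by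
  have hker : pderiv 0 (deltaShear.symm P) = 0 ↔ e P = 0 := by
    rw [← smul_eq_zero_iff_right (by norm_num : (-2 : ℂ) ≠ 0), ← Derivation.smul_apply,
      ← comapAlgEquiv_deltaShear he1 he2, Derivation.comapAlgEquiv_apply,
      AlgEquiv.apply_symm_apply, map_eq_zero_iff _ (AlgEquiv.injective _)]
  have hpderiv (Q : MvPolynomial (Fin 2) ℂ) :
      pderiv 0 Q = 0 ↔ Q ∈ Algebra.adjoin ℂ {X 1} := by
    have hcompl : ({0}ᶜ : Set (Fin 2)) = {1} := by ext i; fin_cases i <;> simp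
    rw [pderiv_eq_zero_iff_mem_supported, hcompl, supported_eq_adjoin_X, Set.image_singleton]
  rw [← hker, hpderiv, hδ, ← deltaShear_X_one, AlgEquiv.mem_adjoin_singleton_apply_iff]
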